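/- arXiv:1707.03814 — 2 statements merged into one kernel-verified Lean document; each statement's English description precedes it below -/
import Mathlib

section
/- A subset S ⊆ 𝕊 is closed in the pcfb-topology if and only if it is closed under pcfb-limits of sequences: whenever (s_k)_{k ∈ ℕ} is a sequence of elements of S that pcfb-converges to a supernatural number s, one has s ∈ S. -/
open Topology

/-- A supernatural number: a function from the set of primes to `ℕ∞ = ℕ ∪ {∞}`,
thought of as the formal product `∏ p ^ (s p)`. -/
def Supernatural : Type := Nat.Primes → ℕ∞

/-- Divisibility of supernatural numbers: `s ∣ t` iff `s p ≤ t p` for every prime `p`. -/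
instance : Dvd Supernatural := ⟨fun s t => ∀ p, s p ≤ t p⟩

/-- The supernatural number associated to a positive natural number,
given by its prime factorization. -/
def natToSuper (n : ℕ+) : Supernatural := fun p => ((n : ℕ).factorization p : ℕ∞)

/-- The pcfb-topology on `𝕊`, generated by the sets `{x | n ∣ x ∧ x ∣ s}`
for `n` a positive natural number and `s` a supernatural number. -/
def pcfbTopology : TopologicalSpace Supernatural :=
  .generateFrom {U | ∃ (n : ℕ+) (t : Supernatural), U = {x | natToSuper n ∣ x ∧ x ∣ t}}

/-- A sequence of supernatural numbers pcfb-converges to `s` if every term divides `s`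
and every positive natural number dividing `s` divides some term. -/
def PcfbConvergesTo (sk : ℕ → Supernatural) (s : Supernatural) : Prop :=
  (∀ k, sk k ∣ s) ∧ ∀ n : ℕ+, natToSuper n ∣ s → ∃ k, natToSuper n ∣ sk k

/-! The sets `{x | n ∣ x ∧ x ∣ t}` are closed under intersection (take the lcm of the lower and
the primewise minimum of the upper bounds), so they form a basis of the pcfb-topology. A sequence
pcfb-converging to `s` enters every basic neighbourhood of `s`, so closed sets are closed under
pcfb-limits. Conversely, if every neighbourhood `{x | n ∣ x ∧ x ∣ s}` of a point `s` meets `S`,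
choosing one point of `S` in it for each of the countably many `n` gives a sequence in `S`
pcfb-converging to `s`. -/

open TopologicalSpace

namespace Supernatural

theorem dvd_trans {s t u : Supernatural} (hst : s ∣ t) (htu : t ∣ u) : s ∣ u :=
  fun p => (hst p).trans (htu p)

theorem natToSuper_one_dvd (x : Supernatural) : natToSuper 1 ∣ x := by
  intro p
  simp [natToSuper]

theorem natToSuper_lcm_dvd_iff {m n : ℕ+} {x : Supernatural} :
    natToSuper (PNat.lcm m n) ∣ x ↔ natToSuper m ∣ x ∧ natToSuper n ∣ x := by
  have hlcm : ∀ p, natToSuper (PNat.lcm m n) p = max (natToSuper m p) (natToSuper n p) := by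
    intro p
    simp only [natToSuper, PNat.lcm_coe, Nat.factorization_lcm m.ne_zero n.ne_zero,
      Finsupp.sup_apply]
    exact Nat.mono_cast.map_max
  show (∀ p, _ ≤ _) ↔ (∀ p, _ ≤ _) ∧ (∀ p, _ ≤ _)
  simp only [hlcm, max_le_iff, forall_and]

noncomputable def gcd (s t : Supernatural) : Supernatural := fun p => min (s p) (t p)

theorem dvd_gcd_iff {x s t : Supernatural} : x ∣ gcd s t ↔ x ∣ s ∧ x ∣ t := by
  show (∀ p, _ ≤ min _ _) ↔ (∀ p, _ ≤ _) ∧ (∀ p, _ ≤ _)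
  simp only [le_min_iff, forall_and]

end Supernatural

open Supernatural

def pcfbBasicOpen (n : ℕ+) (t : Supernatural) : Set Supernatural :=
  {x | natToSuper n ∣ x ∧ x ∣ t}

theorem pcfbBasicOpen_inter (m n : ℕ+) (s t : Supernatural) :
    pcfbBasicOpen m s ∩ pcfbBasicOpen n t = pcfbBasicOpen (PNat.lcm m n) (gcd s t) := by
  ext x
  simp only [pcfbBasicOpen, Set.mem_inter_iff, Set.mem_ofPred_eq, natToSuper_lcm_dvd_iff,
    dvd_gcd_iff]
  tauto

section

attribute [local instance] pcfbTopology

theorem isTopologicalBasis_pcfbBasicOpen :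
    IsTopologicalBasis {U | ∃ (n : ℕ+) (t : Supernatural), U = pcfbBasicOpen n t} where
  exists_subset_inter := by
    rintro _ ⟨m, s, rfl⟩ _ ⟨n, t, rfl⟩ x hx
    rw [pcfbBasicOpen_inter] at hx ⊢
    exact ⟨_, ⟨_, _, rfl⟩, hx, subset_rfl⟩
  sUnion_eq := Set.eq_univ_of_forall fun x =>
    ⟨_, ⟨1, x, rfl⟩, natToSuper_one_dvd x, fun _ => le_rfl⟩
  eq_generateFrom := rfl

theorem PcfbConvergesTo.exists_mem_of_isOpen {sk : ℕ → Supernatural} {s : Supernatural}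
    (h : PcfbConvergesTo sk s) {U : Set Supernatural} (hU : IsOpen U) (hs : s ∈ U) :
    ∃ k, sk k ∈ U := by
  obtain ⟨_, ⟨n, t, rfl⟩, ⟨hns, hst⟩, hU⟩ :=
    isTopologicalBasis_pcfbBasicOpen.isOpen_iff.1 hU s hs
  obtain ⟨k, hk⟩ := h.2 n hns
  exact ⟨k, hU ⟨hk, dvd_trans (h.1 k) hst⟩⟩

theorem exists_seq_pcfbConvergesTo {S : Set Supernatural} {s : Supernatural}
    (h : ∀ n : ℕ+, natToSuper n ∣ s → ∃ x ∈ S, natToSuper n ∣ x ∧ x ∣ s) :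
    ∃ sk : ℕ → Supernatural, (∀ k, sk k ∈ S) ∧ PcfbConvergesTo sk s := by
  have hchoice : ∀ n : ℕ+, ∃ x ∈ S, x ∣ s ∧ (natToSuper n ∣ s → natToSuper n ∣ x) := by
    intro n
    by_cases hn : natToSuper n ∣ s
    · obtain ⟨x, hxS, hnx, hxs⟩ := h n hn
      exact ⟨x, hxS, hxs, fun _ => hnx⟩
    · obtain ⟨x, hxS, -, hxs⟩ := h 1 (natToSuper_one_dvd s)
      exact ⟨x, hxS, hxs, fun hn' => absurd hn' hn⟩
  choose x hxS hxs hnx using hchoice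
  refine ⟨fun k => x k.succPNat, fun k => hxS _, fun k => hxs _, fun n hn => ⟨n.natPred, ?_⟩⟩
  simpa only [PNat.succPNat_natPred] using hnx n hn

theorem isClosed_of_forall_pcfbConvergesTo {S : Set Supernatural}
    (h : ∀ sk : ℕ → Supernatural, (∀ k, sk k ∈ S) → ∀ s, PcfbConvergesTo sk s → s ∈ S) :
    IsClosed S := by
  refine ⟨isTopologicalBasis_pcfbBasicOpen.isOpen_iff.2 fun s hs => ?_⟩
  by_contra! hnbhd
  have hmeets : ∀ n : ℕ+, natToSuper n ∣ s → ∃ x ∈ S, natToSuper n ∣ x ∧ x ∣ s := by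
    intro n hn
    obtain ⟨x, hx, hxS⟩ :=
      Set.not_subset.1 (hnbhd _ ⟨n, s, rfl⟩ ⟨hn, fun _ => le_rfl⟩)
    exact ⟨x, Set.notMem_compl_iff.1 hxS, hx⟩
  obtain ⟨sk, hskS, hsk⟩ := exists_seq_pcfbConvergesTo hmeets
  exact hs (h sk hskS s hsk)

end

theorem stmt5 (S : Set Supernatural) :
    IsClosed[pcfbTopology] S ↔
      ∀ (sk : ℕ → Supernatural), (∀ k, sk k ∈ S) →
        ∀ s : Supernatural, PcfbConvergesTo sk s → s ∈ S := by
  refine ⟨fun hS sk hskS s hsk => ?_, isClosed_of_forall_pcfbConvergesTo⟩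
  by_contra hs
  obtain ⟨k, hk⟩ := hsk.exists_mem_of_isOpen hS.isOpen_compl hs
  exact hk (hskS k)
end

section
/- For each prime p let s_p = ∏_{q prime, q ≠ p} q^∞ (exponent ∞ at every prime except p, exponent 0 at p), and let Ω = ∏_p p^∞. Then the subset X = {s_p : p prime} ∪ {Ω} of 𝕊, with the subspace topology induced by the localic topology, is homeomorphic to the prime spectrum Spec(ℤ) with the Zariski topology; moreover X is closed in the patch topology on 𝕊. -/
open Topology

/-- The localic topology on `𝕊`, generated by the open sets `(n) = {s : n ∣ s}`
for `n` a positive natural number. -/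
def localicTopology : TopologicalSpace Supernatural :=
  .generateFrom {U | ∃ n : ℕ+, U = {s | natToSuper n ∣ s}}

attribute [instance] localicTopology

/-- The patch topology on `𝕊`, generated by the subbasis consisting of the sets
`(n) = {s : n ∣ s}` and their complements, for `n` a positive natural number. -/
def patchTopology : TopologicalSpace Supernatural :=
  .generateFrom
    ({U | ∃ n : ℕ+, U = {s | natToSuper n ∣ s}} ∪
     {U | ∃ n : ℕ+, U = {s | natToSuper n ∣ s}ᶜ})

/-- For a prime `p`, the supernatural number `s_p = ∏_{q ≠ p} q^∞`. -/
noncomputable def sP (p : Nat.Primes) : Supernatural :=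
  fun q => if q = p then 0 else ⊤

/-- The maximal supernatural number `Ω = ∏ p ^ ∞`. -/
def Omega : Supernatural := fun _ => ⊤

/-- The subset `{s_p : p prime} ∪ {Ω}` of `𝕊`. -/
def specZSet : Set Supernatural := {x | (∃ p : Nat.Primes, x = sP p) ∨ x = Omega}

/-!
A prime ideal `P` of a commutative ring gives the supernatural number with exponent `0` at the
primes lying in `P` and `∞` at all others. Since `P` is prime, `n ∉ P` iff no prime factor of `n`
lies in `P`, i.e. iff `n` divides that supernatural number: the preimage of `(n)` is the basic
open `D(n)`. Two distinct primes are coprime, so `P` contains at most one prime number and the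
image lies in `X`. Over `ℤ` every nonempty basic open is some `D(n)` with `n > 0`, so the map is
an embedding of the `T₀` space `Spec ℤ`, with image `X`.

In the patch topology each coordinate `s ↦ s p` is continuous into `ℕ∞` with its order topology,
because `{s | k < s p}` and `{s | s p < k}` are `(p ^ (k + 1))` and the complement of `(p ^ k)`.
Then `X` is cut out by the closed conditions `s p ∈ {0, ∞}` and, for `p ≠ q`, `s p ≠ 0 ∨ s q ≠ 0`.
-/

open PrimeSpectrum

theorem Ideal.IsPrime.natCast_mem_iff_exists_mem_primeFactors {R : Type*} [CommRing R]
    {P : Ideal R} [hP : P.IsPrime] {n : ℕ} (hn : n ≠ 0) :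
    (n : R) ∈ P ↔ ∃ q ∈ n.primeFactors, (q : R) ∈ P := by
  conv_lhs => rw [Nat.prod_primeFactors_pow_factorization hn]
  push_cast
  rw [Ideal.IsPrime.prod_mem_iff]
  refine exists_congr fun q => and_congr_right fun hq => hP.pow_mem_iff_mem _ ?_
  exact (Nat.prime_of_mem_primeFactors hq).factorization_pos_of_dvd hn
    (Nat.dvd_of_mem_primeFactors hq)

theorem Ideal.IsPrime.eq_of_natCast_mem {R : Type*} [CommRing R] {P : Ideal R} (hP : P.IsPrime)
    {p q : Nat.Primes} (hp : (p : R) ∈ P) (hq : (q : R) ∈ P) : p = q := by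
  by_contra hpq
  obtain ⟨u, v, huv⟩ :=
    ((Nat.coprime_primes p.2 q.2).2 (Subtype.coe_injective.ne hpq)).cast (R := R)
  refine hP.ne_top ((Ideal.eq_top_iff_one _).2 ?_)
  exact huv ▸ P.add_mem (P.mul_mem_left u hp) (P.mul_mem_left v hq)

theorem Int.basicOpen_natAbs (a : ℤ) : basicOpen (a.natAbs : ℤ) = basicOpen a := by
  rw [Int.natCast_natAbs]
  rcases abs_choice a with h | h
  · rw [h]
  · ext P
    simp only [h, SetLike.mem_coe, mem_basicOpen, Ideal.neg_mem_iff]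

namespace Supernatural

theorem sP_self (p : Nat.Primes) : sP p p = 0 := if_pos rfl

theorem sP_of_ne {p q : Nat.Primes} (h : q ≠ p) : sP p q = ⊤ := if_neg h

theorem mem_specZSet_iff {s : Supernatural} :
    s ∈ specZSet ↔ (∀ p, s p = 0 ∨ s p = ⊤) ∧ ∀ p q, p ≠ q → s p ≠ 0 ∨ s q ≠ 0 := by
  constructor
  · rintro (⟨r, rfl⟩ | rfl)
    · refine ⟨fun p => ?_, fun p q hpq => ?_⟩
      · by_cases hp : p = r
        · exact .inl (hp ▸ sP_self p)
        · exact .inr (sP_of_ne hp)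
      · by_cases hp : p = r
        · exact .inr (by rw [sP_of_ne (hp ▸ Ne.symm hpq)]; exact ENat.top_ne_zero)
        · exact .inl (by rw [sP_of_ne hp]; exact ENat.top_ne_zero)
    · exact ⟨fun _ => .inr rfl, fun _ _ _ => .inl ENat.top_ne_zero⟩
  · rintro ⟨hval, hzero⟩
    by_cases h : ∃ p, s p = 0
    · obtain ⟨p, hp⟩ := h
      refine .inl ⟨p, funext fun q => ?_⟩
      by_cases hq : q = p
      · rw [hq, hp, sP_self]
      · rw [sP_of_ne hq]
        exact (hval q).resolve_left fun hq0 => (hzero q p hq).elim (· hq0) (· hp)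
    · push Not at h
      exact .inr (funext fun q => (hval q).resolve_left (h q))

theorem isOpen_setOf_natToSuper_dvd (n : ℕ+) : IsOpen {s | natToSuper n ∣ s} :=
  TopologicalSpace.isOpen_generateFrom_of_mem ⟨n, rfl⟩

end Supernatural

open Supernatural

open Classical in
noncomputable def PrimeSpectrum.toSupernatural {R : Type*} [CommRing R] (P : PrimeSpectrum R) :
    Supernatural :=
  fun q => if ((q : ℕ) : R) ∈ P.asIdeal then 0 else ⊤

namespace PrimeSpectrum

section CommRing

variable {R : Type*} [CommRing R] {P : PrimeSpectrum R}

theorem toSupernatural_apply_of_mem {q : Nat.Primes} (h : ((q : ℕ) : R) ∈ P.asIdeal) :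
    P.toSupernatural q = 0 :=
  if_pos h

theorem toSupernatural_apply_of_notMem {q : Nat.Primes} (h : ((q : ℕ) : R) ∉ P.asIdeal) :
    P.toSupernatural q = ⊤ :=
  if_neg h

theorem natToSuper_dvd_toSupernatural_iff (n : ℕ+) :
    natToSuper n ∣ P.toSupernatural ↔ ((n : ℕ) : R) ∉ P.asIdeal := by
  rw [Ideal.IsPrime.natCast_mem_iff_exists_mem_primeFactors n.ne_zero, not_exists]
  refine ⟨fun h q ⟨hq, hqP⟩ => ?_, fun h q => ?_⟩
  · have hq' := Nat.prime_of_mem_primeFactors hq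
    have hle := h ⟨q, hq'⟩
    rw [toSupernatural_apply_of_mem (q := ⟨q, hq'⟩) hqP] at hle
    exact (hq'.factorization_pos_of_dvd n.ne_zero (Nat.dvd_of_mem_primeFactors hq)).ne'
      (Nat.cast_eq_zero.1 (nonpos_iff_eq_zero.1 hle))
  · by_cases hqP : ((q : ℕ) : R) ∈ P.asIdeal
    · rw [toSupernatural_apply_of_mem hqP]
      refine nonpos_iff_eq_zero.2 (Nat.cast_eq_zero.2 (Nat.factorization_eq_zero_of_not_dvd ?_))
      exact fun hdvd => h q ⟨Nat.mem_primeFactors.2 ⟨q.2, hdvd, n.ne_zero⟩, hqP⟩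
    · rw [toSupernatural_apply_of_notMem hqP]
      exact le_top

theorem toSupernatural_preimage_setOf_natToSuper_dvd (n : ℕ+) :
    toSupernatural ⁻¹' {s | natToSuper n ∣ s} = (basicOpen ((n : ℕ) : R) : Set (PrimeSpectrum R)) :=
  Set.ext fun _ => natToSuper_dvd_toSupernatural_iff n

theorem continuous_toSupernatural :
    Continuous (toSupernatural : PrimeSpectrum R → Supernatural) := by
  refine continuous_generateFrom_iff.2 ?_
  rintro _ ⟨n, rfl⟩
  rw [toSupernatural_preimage_setOf_natToSuper_dvd]
  exact (basicOpen _).isOpen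

theorem toSupernatural_eq_sP {p : Nat.Primes} (hp : ((p : ℕ) : R) ∈ P.asIdeal) :
    P.toSupernatural = sP p := by
  funext q
  by_cases hq : q = p
  · rw [hq, sP_self, toSupernatural_apply_of_mem hp]
  · rw [sP_of_ne hq, toSupernatural_apply_of_notMem]
    exact fun hqP => hq (P.isPrime.eq_of_natCast_mem hqP hp)

theorem toSupernatural_eq_omega (h : ∀ p : Nat.Primes, ((p : ℕ) : R) ∉ P.asIdeal) :
    P.toSupernatural = Omega :=
  funext fun q => toSupernatural_apply_of_notMem (h q)

theorem toSupernatural_mem_specZSet (P : PrimeSpectrum R) : P.toSupernatural ∈ specZSet := by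
  by_cases h : ∃ p : Nat.Primes, ((p : ℕ) : R) ∈ P.asIdeal
  · obtain ⟨p, hp⟩ := h
    exact .inl ⟨p, toSupernatural_eq_sP hp⟩
  · exact .inr (toSupernatural_eq_omega (not_exists.1 h))

end CommRing

theorem isInducing_toSupernatural_int :
    Topology.IsInducing (toSupernatural : PrimeSpectrum ℤ → Supernatural) := by
  refine ⟨le_antisymm (continuous_iff_le_induced.1 continuous_toSupernatural) ?_⟩
  rw [isTopologicalBasis_basic_opens.eq_generateFrom]
  refine le_generateFrom ?_
  rintro _ ⟨a, rfl⟩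
  rcases eq_or_ne a 0 with rfl | ha
  · simp
  · let n : ℕ+ := ⟨a.natAbs, Int.natAbs_pos.2 ha⟩
    have hn : basicOpen ((n : ℕ) : ℤ) = basicOpen a := Int.basicOpen_natAbs a
    dsimp only
    rw [← hn, ← toSupernatural_preimage_setOf_natToSuper_dvd]
    exact isOpen_induced (isOpen_setOf_natToSuper_dvd n)

theorem range_toSupernatural_int :
    Set.range (toSupernatural : PrimeSpectrum ℤ → Supernatural) = specZSet := by
  refine (Set.range_subset_iff.2 toSupernatural_mem_specZSet).antisymm ?_
  rintro _ (⟨p, rfl⟩ | rfl)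
  · have hprime : Prime ((p : ℕ) : ℤ) := Nat.prime_iff_prime_int.1 p.2
    exact ⟨⟨_, (Ideal.span_singleton_prime hprime.ne_zero).2 hprime⟩,
      toSupernatural_eq_sP (Ideal.mem_span_singleton_self _)⟩
  · exact ⟨⟨⊥, Ideal.isPrime_bot⟩, toSupernatural_eq_omega fun p => by simpa using p.2.ne_zero⟩

end PrimeSpectrum

namespace Supernatural

theorem natToSuper_pow_apply (p : Nat.Primes) (k : ℕ) (q : Nat.Primes) :
    natToSuper ((p : ℕ+) ^ k) q = if q = p then (k : ℕ∞) else 0 := by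
  simp only [natToSuper, PNat.pow_coe, Nat.Primes.coe_pnat_nat, p.2.factorization_pow,
    Finsupp.single_apply, Nat.Primes.coe_nat_inj, eq_comm (a := p)]
  split_ifs <;> rfl

theorem natToSuper_pow_dvd_iff (p : Nat.Primes) (k : ℕ) (s : Supernatural) :
    natToSuper ((p : ℕ+) ^ k) ∣ s ↔ (k : ℕ∞) ≤ s p := by
  refine ⟨fun h => by simpa [natToSuper_pow_apply] using h p, fun h q => ?_⟩
  rw [natToSuper_pow_apply]
  split_ifs with hq
  exacts [hq ▸ h, zero_le]

theorem isOpen_patch_setOf_natToSuper_dvd (n : ℕ+) :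
    IsOpen[patchTopology] {s | natToSuper n ∣ s} :=
  TopologicalSpace.isOpen_generateFrom_of_mem (.inl ⟨n, rfl⟩)

theorem isOpen_patch_setOf_not_natToSuper_dvd (n : ℕ+) :
    IsOpen[patchTopology] {s | ¬natToSuper n ∣ s} :=
  TopologicalSpace.isOpen_generateFrom_of_mem (.inr ⟨n, rfl⟩)

theorem continuous_patch_apply (p : Nat.Primes) :
    Continuous[patchTopology, _] fun s : Supernatural => s p := by
  let := patchTopology
  refine continuous_generateFrom_iff.2 ?_
  rintro _ ⟨a, rfl | rfl⟩
  · induction a using ENat.recTopCoe with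
    | top => simp
    | coe k =>
      convert isOpen_patch_setOf_natToSuper_dvd ((p : ℕ+) ^ (k + 1)) using 1
      ext s
      simp [natToSuper_pow_dvd_iff, ENat.add_one_le_iff]
  · induction a using ENat.recTopCoe with
    | top =>
      have hfinite : (fun s : Supernatural => s p) ⁻¹' Set.Iio ⊤ =
          ⋃ k : ℕ, {s | ¬natToSuper ((p : ℕ+) ^ k) ∣ s} := by
        ext s
        simp only [Set.mem_preimage, Set.mem_Iio, Set.mem_iUnion, Set.mem_ofPred_eq,
          natToSuper_pow_dvd_iff, not_le, lt_top_iff_ne_top]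
        exact ⟨ENat.exists_nat_gt, fun ⟨k, hk⟩ => (hk.trans (ENat.natCast_lt_top k)).ne⟩
      rw [hfinite]
      exact isOpen_iUnion fun k => isOpen_patch_setOf_not_natToSuper_dvd _
    | coe k =>
      convert isOpen_patch_setOf_not_natToSuper_dvd ((p : ℕ+) ^ k) using 1
      ext s
      simp [natToSuper_pow_dvd_iff]

theorem isClosed_patch_specZSet : IsClosed[patchTopology] specZSet := by
  let := patchTopology
  have hzero_or_top (p : Nat.Primes) : IsClosed {s : Supernatural | s p = 0 ∨ s p = ⊤} :=
    (Set.toFinite {0, ⊤}).isClosed.preimage (continuous_patch_apply p)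
  have hne_zero (p : Nat.Primes) : IsClosed {s : Supernatural | s p ≠ 0} :=
    (ENat.isOpen_singleton ENat.zero_ne_top).isClosed_compl.preimage (continuous_patch_apply p)
  have hspec : specZSet = (⋂ p, {s : Supernatural | s p = 0 ∨ s p = ⊤}) ∩
      ⋂ p, ⋂ q, {s : Supernatural | p ≠ q → s p ≠ 0 ∨ s q ≠ 0} := Set.ext fun s => by
    simp only [Set.mem_inter_iff, Set.mem_iInter, Set.mem_ofPred_eq]
    exact mem_specZSet_iff
  rw [hspec]
  refine (isClosed_iInter hzero_or_top).inter
    (isClosed_iInter fun p => isClosed_iInter fun q => ?_)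
  exact isClosed_imp isOpen_const ((hne_zero p).union (hne_zero q))

end Supernatural

theorem stmt16 :
    Nonempty (specZSet ≃ₜ PrimeSpectrum ℤ) ∧ IsClosed[patchTopology] specZSet :=
  ⟨⟨(isInducing_toSupernatural_int.isEmbedding.toHomeomorph.trans
      (.setCongr range_toSupernatural_int)).symm⟩, isClosed_patch_specZSet⟩
end
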